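/- arXiv:2501.15540 — 5 statements merged into one kernel-verified Lean document; each statement's English description precedes it below -/
import Mathlib

section
/- Let A : ℝⁿ → Set ℝⁿ be a set-valued operator that is partly smooth at x̄ relative to a manifold M ⊆ ℝⁿ given by a C^p patch through x̄. Then there exists δ > 0 such that for every x ∈ M with ‖x − x̄‖ < δ one has N_M(x) = Lin(A(x)). -/
open Filter Topology Set RealInnerProductSpace

noncomputable section

/-- A set-valued operator `A` is upper semicontinuous: whenever `x k → x₀`,
`u k ∈ A (x k)` for all `k`, and `u k → u₀`, then `u₀ ∈ A x₀`. -/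
def UpperSC {E : Type*} [NormedAddCommGroup E] [InnerProductSpace ℝ E]
    (A : E → Set E) : Prop :=
  ∀ (x u : ℕ → E) (x₀ u₀ : E),
    Tendsto x atTop (𝓝 x₀) → (∀ k, u k ∈ A (x k)) → Tendsto u atTop (𝓝 u₀) →
      u₀ ∈ A x₀

/-- `A` is lower semicontinuous along `S` at `x₀ ∈ S`. -/
def LowerSCAlongAt {E : Type*} [NormedAddCommGroup E] [InnerProductSpace ℝ E]
    (A : E → Set E) (S : Set E) (x₀ : E) : Prop :=
  ∀ u₀ ∈ A x₀, ∀ x : ℕ → E, (∀ k, x k ∈ S) → Tendsto x atTop (𝓝 x₀) →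
    ∃ u : ℕ → E, (∀ k, u k ∈ A (x k)) ∧ Tendsto u atTop (𝓝 u₀)

/-- `A` is continuous along `S` near `xbar`: lower semicontinuous along `S` at every
point of `S` in some neighborhood of `xbar`. -/
def ContinuousAlongNear {E : Type*} [NormedAddCommGroup E] [InnerProductSpace ℝ E]
    (A : E → Set E) (S : Set E) (xbar : E) : Prop :=
  ∃ W ∈ 𝓝 xbar, ∀ x ∈ S ∩ W, LowerSCAlongAt A S x

/-- A `C^p` patch (local parametrization) of a manifold `M ⊆ E` through `xbar`,
with parameter domain `F` (playing the role of `ℝ^d`). -/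
structure CpPatch (p : ℕ∞) (F : Type*) [NormedAddCommGroup F] [InnerProductSpace ℝ F]
    {E : Type*} [NormedAddCommGroup E] [InnerProductSpace ℝ E]
    (M : Set E) (xbar : E) where
  V : Set F
  toFun : F → E
  isOpen_V : IsOpen V
  zero_mem : (0 : F) ∈ V
  contDiffOn : ContDiffOn ℝ p toFun V
  injOn : Set.InjOn toFun V
  fderiv_injective : ∀ t ∈ V, Function.Injective (fderiv ℝ toFun t)
  map_zero : toFun 0 = xbar
  image_eq : M = toFun '' V

namespace CpPatch

variable {p : ℕ∞} {F : Type*} [NormedAddCommGroup F] [InnerProductSpace ℝ F]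
  {E : Type*} [NormedAddCommGroup E] [InnerProductSpace ℝ E] {M : Set E} {xbar : E}

/-- The tangent space `T_M(x) = range (Dφ(t))` where `x = φ(t)`, `t ∈ V`. -/
def tangent (P : CpPatch p F M xbar) (x : E) : Submodule ℝ E :=
  haveI : Nonempty F := ⟨0⟩
  LinearMap.range (fderiv ℝ P.toFun (Function.invFunOn P.toFun P.V x) : F →ₗ[ℝ] E)

/-- The normal space `N_M(x) = (T_M(x))ᗮ`. -/
def normal (P : CpPatch p F M xbar) (x : E) : Submodule ℝ E :=
  (P.tangent x)ᗮ

end CpPatch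

/-- `Lin S`: the direction of the affine span of `S`. -/
def Lin {E : Type*} [NormedAddCommGroup E] [InnerProductSpace ℝ E] (S : Set E) :
    Submodule ℝ E :=
  (affineSpan ℝ S).direction

/-- `A` is partly smooth at `xbar` relative to `M` (given by the `C^p` patch `P`). -/
def PartlySmoothAt {p : ℕ∞} {F : Type*} [NormedAddCommGroup F] [InnerProductSpace ℝ F]
    {E : Type*} [NormedAddCommGroup E] [InnerProductSpace ℝ E] [FiniteDimensional ℝ E]
    (A : E → Set E) (M : Set E) (xbar : E) (P : CpPatch p F M xbar) : Prop :=
  UpperSC A ∧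
  -- Regularity
  (∃ W ∈ 𝓝 xbar, ∀ x ∈ W, (A x).Nonempty ∧ IsClosed (A x) ∧ Convex ℝ (A x)) ∧
  -- Sharpness
  P.normal xbar = Lin (A xbar) ∧
  (∃ η : E → E, ∃ W ∈ 𝓝 xbar, ContinuousOn η (M ∩ W) ∧
    ∀ x ∈ M ∩ W,
      (fun v => (Submodule.orthogonalProjection (P.tangent x) v : E)) '' A x = {η x}) ∧
  -- Continuity
  ContinuousAlongNear A M xbar

/-- The `ε`-localization of `A` around `(xbar, ubar)`. -/
def Locz {E : Type*} [NormedAddCommGroup E] [InnerProductSpace ℝ E]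
    (A : E → Set E) (xbar ubar : E) (ε : ℝ) (x : E) : Set E :=
  if ‖x - xbar‖ < ε then {u ∈ A x | ‖u - ubar‖ < ε} else ∅

/-- `A` is `r`-resolvent-regular at `xbar` for `ubar`, with constants `r > 0`, `ε > 0`. -/
def ResolventRegular {E : Type*} [NormedAddCommGroup E] [InnerProductSpace ℝ E]
    (A : E → Set E) (xbar ubar : E) (r ε : ℝ) : Prop :=
  0 < r ∧ 0 < ε ∧
  (∀ x y u v : E, u ∈ Locz A xbar ubar ε x → v ∈ Locz A xbar ubar ε y →
    (inner ℝ (x - y) (u - v) : ℝ) ≥ -r * ‖x - y‖ ^ 2) ∧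
  (∀ γ : ℝ, 0 < γ → γ < 1 / r →
    ∃ W ∈ 𝓝 (xbar + γ • ubar), ∃ J : E → E, ContinuousOn J W ∧
      ∀ z ∈ W, ∀ x : E,
        (∃ u ∈ Locz A xbar ubar ε x, z = x + γ • u) ↔ x = J z)

/-- The local union `U_{γ,ε} = ⋃_{x ∈ M, ‖x-x̄‖<ε} (x + γ A_ε(x))`. -/
def LocalUnion {E : Type*} [NormedAddCommGroup E] [InnerProductSpace ℝ E]
    (A : E → Set E) (M : Set E) (xbar ubar : E) (γ ε : ℝ) : Set E :=
  {z | ∃ x ∈ M, ‖x - xbar‖ < ε ∧ ∃ u ∈ Locz A xbar ubar ε x, z = x + γ • u}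

/-!
On `M` the normal spaces `N_M(x)` all have dimension `dim E - d`, and the projection condition of
sharpness forces `Lin (A x) ≤ N_M(x)`. Conversely, lower semicontinuity at `x̄` lets us follow an
affinely independent family spanning `A x̄` by points of `A x`; affine independence is an open
condition, so `dim Lin (A x) ≥ dim Lin (A x̄) = dim N_M(x̄)` for `x ∈ M` near `x̄`.
-/

open Module

theorem AffineIndependent.finrank_vectorSpan_range_eq {k V P ι : Type*} [DivisionRing k]
    [AddCommGroup V] [Module k V] [AddTorsor V P] [Fintype ι] {f g : ι → P}
    (hf : AffineIndependent k f) (hg : AffineIndependent k g) :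
    finrank k (vectorSpan k (range f)) = finrank k (vectorSpan k (range g)) := by
  rcases isEmpty_or_nonempty ι with _ | _
  · rw [range_eq_empty f, range_eq_empty g]
  · have hf' := hf.finrank_vectorSpan_add_one
    have hg' := hg.finrank_vectorSpan_add_one
    omega

section

variable {E : Type*} [NormedAddCommGroup E] [InnerProductSpace ℝ E]

theorem Lin_le_orthogonal_of_subsingleton_image {K : Submodule ℝ E} [K.HasOrthogonalProjection]
    {S : Set E} (h : (K.starProjection '' S).Subsingleton) : Lin S ≤ Kᗮ := by
  rw [Lin, direction_affineSpan, vectorSpan_def, Submodule.span_le]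
  rintro _ ⟨u, hu, v, hv, rfl⟩
  show u -ᵥ v ∈ Kᗮ
  have huv : K.starProjection u = K.starProjection v :=
    h (mem_image_of_mem _ hu) (mem_image_of_mem _ hv)
  have hsplit : u -ᵥ v = (u - K.starProjection u) - (v - K.starProjection v) := by
    rw [vsub_eq_sub, huv]
    abel
  rw [hsplit]
  exact sub_mem (K.sub_starProjection_mem_orthogonal u) (K.sub_starProjection_mem_orthogonal v)

variable [FiniteDimensional ℝ E] {A : E → Set E} {S : Set E} {x₀ : E}

theorem LowerSCAlongAt.eventually_finrank_Lin_le_of_tendsto (h : LowerSCAlongAt A S x₀)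
    {x : ℕ → E} (hxS : ∀ k, x k ∈ S) (hx : Tendsto x atTop (𝓝 x₀)) :
    ∀ᶠ k in atTop, finrank ℝ (Lin (A x₀)) ≤ finrank ℝ (Lin (A (x k))) := by
  obtain ⟨t, htA, hspan, hind⟩ := exists_affineIndependent ℝ E (A x₀)
  have := finite_of_fin_dim_affineIndependent ℝ hind
  have := Fintype.ofFinite t
  choose u huA hu using fun i : t => h i (htA i.2) x hxS hx
  have hlim : Tendsto (fun k (i : t) => u i k) atTop (𝓝 Subtype.val) := tendsto_pi_nhds.2 hu
  filter_upwards [hlim.eventually (isOpen_setOfPred_affineIndependent.mem_nhds hind)] with k hk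
  calc finrank ℝ (Lin (A x₀))
      = finrank ℝ (vectorSpan ℝ (range (Subtype.val : t → E))) := by
        rw [Lin, ← hspan, direction_affineSpan, Subtype.range_coe]
    _ = finrank ℝ (vectorSpan ℝ (range fun i => u i k)) := hind.finrank_vectorSpan_range_eq hk
    _ ≤ finrank ℝ (Lin (A (x k))) := by
        rw [Lin, direction_affineSpan]
        exact Submodule.finrank_mono (vectorSpan_mono ℝ (range_subset_iff.2 fun i => huA i k))

theorem LowerSCAlongAt.eventually_finrank_Lin_le (h : LowerSCAlongAt A S x₀) :
    ∀ᶠ x in 𝓝[S] x₀, finrank ℝ (Lin (A x₀)) ≤ finrank ℝ (Lin (A x)) := by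
  by_contra hfreq
  obtain ⟨x, hx, hbad⟩ := frequently_iff_seq_forall.1
    ((not_eventually.1 hfreq).and_eventually self_mem_nhdsWithin)
  obtain ⟨k, hk⟩ := (h.eventually_finrank_Lin_le_of_tendsto (fun k => (hbad k).2)
    (tendsto_nhds_of_tendsto_nhdsWithin hx)).exists
  exact (hbad k).1 hk

end

namespace CpPatch

variable {p : ℕ∞} {F : Type*} [NormedAddCommGroup F] [InnerProductSpace ℝ F]
  {E : Type*} [NormedAddCommGroup E] [InnerProductSpace ℝ E] {M : Set E} {xbar : E}

theorem base_mem (P : CpPatch p F M xbar) : xbar ∈ M := by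
  rw [P.image_eq]
  exact ⟨0, P.zero_mem, P.map_zero⟩

theorem finrank_tangent (P : CpPatch p F M xbar) {x : E} (hx : x ∈ M) :
    finrank ℝ (P.tangent x) = finrank ℝ F := by
  have : Nonempty F := ⟨0⟩
  rw [P.image_eq] at hx
  exact LinearMap.finrank_range_of_inj (P.fderiv_injective _ (Function.invFunOn_mem hx))

theorem finrank_normal [FiniteDimensional ℝ E] (P : CpPatch p F M xbar)
    {x : E} (hx : x ∈ M) : finrank ℝ (P.normal x) = finrank ℝ E - finrank ℝ F := by
  have h := (P.tangent x).finrank_add_finrank_orthogonal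
  rw [P.finrank_tangent hx] at h
  rw [normal]
  omega

end CpPatch

theorem partly_smooth_local_normal_sharpness_general {n d : ℕ} {p : ℕ∞}
    (A : EuclideanSpace ℝ (Fin n) → Set (EuclideanSpace ℝ (Fin n))) (M : Set (EuclideanSpace ℝ (Fin n))) (xbar : EuclideanSpace ℝ (Fin n))
    (P : CpPatch p (EuclideanSpace ℝ (Fin d)) M xbar)
    (hA : PartlySmoothAt A M xbar P) :
    ∃ δ > 0, ∀ x ∈ M, ‖x - xbar‖ < δ → P.normal x = Lin (A x) := by
  obtain ⟨-, -, hsharp, ⟨η, W, hW, -, hproj⟩, Wc, hWc, hlsc⟩ := hA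
  have hdim := (hlsc xbar ⟨P.base_mem, mem_of_mem_nhds hWc⟩).eventually_finrank_Lin_le
  obtain ⟨δ, hδ, hball⟩ := Metric.mem_nhdsWithin_iff.1
    (inter_mem hdim (mem_nhdsWithin_of_mem_nhds hW))
  refine ⟨δ, hδ, fun x hxM hx => ?_⟩
  obtain ⟨hdimx, hxW⟩ := hball ⟨mem_ball_iff_norm.2 hx, hxM⟩
  have hle : Lin (A x) ≤ P.normal x := Lin_le_orthogonal_of_subsingleton_image <| by
    rw [show (P.tangent x).starProjection '' A x = {η x} from hproj x ⟨hxM, hxW⟩]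
    exact subsingleton_singleton
  refine (Submodule.eq_of_le_of_finrank_le hle ?_).symm
  rw [P.finrank_normal hxM, ← P.finrank_normal P.base_mem, hsharp]
  exact hdimx

/-- local normal sharpness. -/
theorem partly_smooth_local_normal_sharpness {n d : ℕ} {p : ℕ∞} (hp : 1 ≤ p)
    (A : EuclideanSpace ℝ (Fin n) → Set (EuclideanSpace ℝ (Fin n))) (M : Set (EuclideanSpace ℝ (Fin n))) (xbar : EuclideanSpace ℝ (Fin n))
    (P : CpPatch p (EuclideanSpace ℝ (Fin d)) M xbar)
    (hA : PartlySmoothAt A M xbar P) :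
    ∃ δ > 0, ∀ x ∈ M, ‖x - xbar‖ < δ → P.normal x = Lin (A x) :=
  partly_smooth_local_normal_sharpness_general A M xbar P hA

end
end

section
/- Let M ⊆ ℝⁿ be given by a C¹ patch through x̄. Then for every ε > 0, the linear span of the set ⋃_{x ∈ M, ‖x − x̄‖ < ε} (x + N_M(x)) = {x + v : x ∈ M, ‖x − x̄‖ < ε, v ∈ N_M(x)} is all of ℝⁿ. -/
open Filter Topology Set RealInnerProductSpace

noncomputable section

/-! The span `K` contains `M ∩ B(x̄, ε)` (take `v = 0`), in particular `x̄`, hence also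
`N_M(x̄) = (x̄ + N_M(x̄)) - x̄`. The patch maps a neighbourhood of `0` into `K`, so every functional
vanishing on `K` kills its derivative at `0`: `T_M(x̄) = range Dφ(0) ⊆ Kᗮᗮ = K`. Finally
`T_M(x̄) ⊔ N_M(x̄)` is the whole space. -/

theorem HasFDerivAt.range_le_of_eventually_mem {F E : Type*} [NormedAddCommGroup F]
    [NormedSpace ℝ F] [NormedAddCommGroup E] [InnerProductSpace ℝ E]
    {K : Submodule ℝ E} [K.HasOrthogonalProjection] {f : F → E} {f' : F →L[ℝ] E} {a : F}
    (hf : HasFDerivAt f f' a) (hK : ∀ᶠ t in 𝓝 a, f t ∈ K) :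
    LinearMap.range (f' : F →ₗ[ℝ] E) ≤ K := by
  rintro _ ⟨w, rfl⟩
  rw [← K.orthogonal_orthogonal, Submodule.mem_orthogonal]
  intro u hu
  have hzero : ∀ᶠ t in 𝓝 a, ⟪u, f t⟫ = (0 : ℝ) := hK.mono fun t ht =>
    (K.mem_orthogonal' u).mp hu _ ht
  have hderiv : (innerSL ℝ u).comp f' = 0 :=
    (((innerSL ℝ u).hasFDerivAt.comp a hf).congr_of_eventuallyEq (EventuallyEq.symm hzero)).unique
      (hasFDerivAt_const 0 a)
  simpa using congrArg (· w) hderiv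

namespace CpPatch

variable {p : ℕ∞} {F : Type*} [NormedAddCommGroup F] [InnerProductSpace ℝ F]
  {E : Type*} [NormedAddCommGroup E] [InnerProductSpace ℝ E] {M : Set E} {xbar : E}
  (P : CpPatch p F M xbar)

theorem mem_of_mem_V {t : F} (ht : t ∈ P.V) : P.toFun t ∈ M :=
  P.image_eq.symm.subset (mem_image_of_mem _ ht)

include P in
theorem xbar_mem : xbar ∈ M := by
  simpa [P.map_zero] using P.mem_of_mem_V P.zero_mem

theorem tangent_xbar :
    P.tangent xbar = LinearMap.range (fderiv ℝ P.toFun 0 : F →ₗ[ℝ] E) := by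
  have : Function.invFunOn P.toFun P.V xbar = 0 := by
    simpa [P.map_zero] using P.injOn.leftInvOn_invFunOn P.zero_mem
  rw [tangent, this]

theorem hasFDerivAt_zero (hp : p ≠ 0) : HasFDerivAt P.toFun (fderiv ℝ P.toFun 0) 0 :=
  ((P.contDiffOn.differentiableOn (by exact_mod_cast hp)).differentiableAt
    (P.isOpen_V.mem_nhds P.zero_mem)).hasFDerivAt

theorem eventually_mem_ball {ε : ℝ} (hε : 0 < ε) :
    ∀ᶠ t in 𝓝 0, P.toFun t ∈ M ∧ ‖P.toFun t - xbar‖ < ε := by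
  have hV : P.V ∈ 𝓝 (0 : F) := P.isOpen_V.mem_nhds P.zero_mem
  have hcont : ContinuousAt P.toFun 0 := P.contDiffOn.continuousOn.continuousAt hV
  filter_upwards [hV, hcont.eventually (Metric.ball_mem_nhds _ hε)] with t htV htε
  rw [P.map_zero] at htε
  exact ⟨P.mem_of_mem_V htV, mem_ball_iff_norm.mp htε⟩

end CpPatch

/-- the local union of normal spaces spans the whole space. -/
theorem span_local_normal_union {n d : ℕ}
    (M : Set (EuclideanSpace ℝ (Fin n))) (xbar : EuclideanSpace ℝ (Fin n))
    (P : CpPatch 1 (EuclideanSpace ℝ (Fin d)) M xbar) :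
    ∀ ε > 0,
      Submodule.span ℝ
        {z : EuclideanSpace ℝ (Fin n) | ∃ x ∈ M, ‖x - xbar‖ < ε ∧ ∃ v ∈ P.normal x, z = x + v} = ⊤ := by
  intro ε hε
  set K := Submodule.span ℝ
    {z : EuclideanSpace ℝ (Fin n) | ∃ x ∈ M, ‖x - xbar‖ < ε ∧ ∃ v ∈ P.normal x, z = x + v}
  have hM : ∀ x ∈ M, ‖x - xbar‖ < ε → x ∈ K := fun x hx hxε =>
    Submodule.subset_span ⟨x, hx, hxε, 0, zero_mem _, (add_zero x).symm⟩
  have hxbarε : ‖xbar - xbar‖ < ε := by simpa using hε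
  have hN : P.normal xbar ≤ K := fun v hv => by
    simpa using K.sub_mem (Submodule.subset_span ⟨xbar, P.xbar_mem, hxbarε, v, hv, rfl⟩)
      (hM xbar P.xbar_mem hxbarε)
  have hT : P.tangent xbar ≤ K := by
    rw [P.tangent_xbar]
    exact (P.hasFDerivAt_zero one_ne_zero).range_le_of_eventually_mem
      ((P.eventually_mem_ball hε).mono fun t ht => hM _ ht.1 ht.2)
  rw [eq_top_iff, ← (P.tangent xbar).sup_orthogonal_of_hasOrthogonalProjection]
  exact sup_le hT hN

end
end

section
/- Let A : ℝⁿ → Set ℝⁿ be partly smooth at x̄ relative to a manifold M given by a C^p patch through x̄, r-resolvent-regular at x̄ for ū ∈ A(x̄), with ū ∈ ri(A(x̄)). Then for every γ ∈ (0, 1/r) there exists ε̄ > 0 such that for every ε ∈ (0, ε̄) and every ϵ > 0 the following identification holds: whenever x, u ∈ ℝⁿ satisfy u ∈ A_ε(x) and x + γu belongs to the erosion U_{γ,ε} ⊖ B_ϵ := {z ∈ ℝⁿ : ∀ w, ‖w − z‖ ≤ ϵ → w ∈ U_{γ,ε}}, then x ∈ M. -/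
open Filter Topology Set RealInnerProductSpace

noncomputable section

/-! The point `z = x + γu` lies in the erosion, hence in `U_{γ,ε}`, so `z = x' + γu'` with
`x' ∈ M`. For `ε` small both representations of `z` lie near `x̄ + γū`, where the resolvent
of the localization is single-valued; hence `x = x'`. -/

section Localization

variable {E : Type*} [NormedAddCommGroup E] [InnerProductSpace ℝ E]
  {A : E → Set E} {xbar ubar x u : E} {ε ε' : ℝ}

theorem mem_Locz_iff :
    u ∈ Locz A xbar ubar ε x ↔ ‖x - xbar‖ < ε ∧ u ∈ A x ∧ ‖u - ubar‖ < ε := by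
  unfold Locz
  split_ifs with h <;> simp [h]

theorem Locz_mono (h : ε ≤ ε') : Locz A xbar ubar ε x ⊆ Locz A xbar ubar ε' x := by
  intro u hu
  obtain ⟨hx, hu, hu'⟩ := mem_Locz_iff.mp hu
  exact mem_Locz_iff.mpr ⟨hx.trans_le h, hu, hu'.trans_le h⟩

theorem norm_add_smul_sub_lt_of_mem_Locz {γ : ℝ} (hγ : 0 ≤ γ) (hu : u ∈ Locz A xbar ubar ε x) :
    ‖(x + γ • u) - (xbar + γ • ubar)‖ < (1 + γ) * ε := by
  obtain ⟨hx, -, hu⟩ := mem_Locz_iff.mp hu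
  calc ‖(x + γ • u) - (xbar + γ • ubar)‖ = ‖(x - xbar) + γ • (u - ubar)‖ := by
        rw [smul_sub]; abel_nf
    _ ≤ ‖x - xbar‖ + γ * ‖u - ubar‖ := by
        grw [norm_add_le, norm_smul, Real.norm_of_nonneg hγ]
    _ < (1 + γ) * ε := by nlinarith

end Localization

theorem ResolventRegular.exists_eq_of_add_smul_eq {E : Type*} [NormedAddCommGroup E]
    [InnerProductSpace ℝ E] {A : E → Set E} {xbar ubar : E} {r ε₀ γ : ℝ}
    (hreg : ResolventRegular A xbar ubar r ε₀) (hγ : 0 < γ) (hγr : γ < 1 / r) :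
    ∃ εbar > 0, ∀ ε < εbar, ∀ x x' u u' : E,
      u ∈ Locz A xbar ubar ε x → u' ∈ Locz A xbar ubar ε x' → x + γ • u = x' + γ • u' →
        x = x' := by
  obtain ⟨-, hε₀, -, hres⟩ := hreg
  obtain ⟨W, hW, J, -, hJ⟩ := hres γ hγ hγr
  obtain ⟨δ, hδ, hball⟩ := Metric.mem_nhds_iff.mp hW
  have hγ₁ : 0 < 1 + γ := by linarith
  refine ⟨min ε₀ (δ / (1 + γ)), lt_min hε₀ (div_pos hδ hγ₁), ?_⟩
  intro ε hε x x' u u' hu hu' hz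
  have hεε₀ : ε ≤ ε₀ := (hε.trans_le (min_le_left _ _)).le
  have hzW : x + γ • u ∈ W := by
    refine hball (mem_ball_iff_norm.mpr ((norm_add_smul_sub_lt_of_mem_Locz hγ.le hu).trans_le ?_))
    rw [← le_div_iff₀' hγ₁]
    exact (hε.trans_le (min_le_right _ _)).le
  rw [(hJ _ hzW x).mp ⟨u, Locz_mono hεε₀ hu, rfl⟩,
    (hJ _ hzW x').mp ⟨u', Locz_mono hεε₀ hu', hz⟩]

theorem identification_erosion_general {n : ℕ}
    (A : EuclideanSpace ℝ (Fin n) → Set (EuclideanSpace ℝ (Fin n))) (M : Set (EuclideanSpace ℝ (Fin n))) (xbar ubar : EuclideanSpace ℝ (Fin n))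
    (r ε₀ : ℝ)
    (hreg : ResolventRegular A xbar ubar r ε₀) :
    ∀ γ : ℝ, 0 < γ → γ < 1 / r → ∃ εbar > 0, ∀ ε : ℝ, 0 < ε → ε < εbar →
      ∀ ϵ : ℝ, 0 < ϵ → ∀ x u : EuclideanSpace ℝ (Fin n), u ∈ Locz A xbar ubar ε x →
        (∀ w : EuclideanSpace ℝ (Fin n), ‖w - (x + γ • u)‖ ≤ ϵ → w ∈ LocalUnion A M xbar ubar γ ε) →
        x ∈ M := by
  intro γ hγ hγr
  obtain ⟨εbar, hεbar, hinj⟩ := hreg.exists_eq_of_add_smul_eq hγ hγr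
  refine ⟨εbar, hεbar, fun ε _ hε ϵ hϵ x u hu herosion => ?_⟩
  obtain ⟨x', hx'M, -, u', hu', hz⟩ := herosion (x + γ • u) (by simpa using hϵ.le)
  rwa [hinj ε hε x x' u u' hu hu' hz]

/-- identification via the erosion of the local union. -/
theorem identification_erosion {n d : ℕ} {p : ℕ∞} (hp : 1 ≤ p)
    (A : EuclideanSpace ℝ (Fin n) → Set (EuclideanSpace ℝ (Fin n))) (M : Set (EuclideanSpace ℝ (Fin n))) (xbar ubar : EuclideanSpace ℝ (Fin n))
    (P : CpPatch p (EuclideanSpace ℝ (Fin d)) M xbar)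
    (hA : PartlySmoothAt A M xbar P)
    (hubar : ubar ∈ A xbar) (r ε₀ : ℝ)
    (hreg : ResolventRegular A xbar ubar r ε₀)
    (hri : ubar ∈ intrinsicInterior ℝ (A xbar)) :
    ∀ γ : ℝ, 0 < γ → γ < 1 / r → ∃ εbar > 0, ∀ ε : ℝ, 0 < ε → ε < εbar →
      ∀ ϵ : ℝ, 0 < ϵ → ∀ x u : EuclideanSpace ℝ (Fin n), u ∈ Locz A xbar ubar ε x →
        (∀ w : EuclideanSpace ℝ (Fin n), ‖w - (x + γ • u)‖ ≤ ϵ → w ∈ LocalUnion A M xbar ubar γ ε) →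
        x ∈ M :=
  identification_erosion_general A M xbar ubar r ε₀ hreg

end
end

section
/- Let H be a real inner product space, κ > 0, β > 0, and B : H → H with ⟨B x − B y, x − y⟩ ≥ κ‖x − y‖² and ‖B x − B y‖ ≤ (1/β)‖x − y‖ for all x, y. Let J : H → H be nonexpansive, let γ > 0 satisfy 0 ≤ 1 − 2γκ + γ²/β² < 1, and set ρ = √(1 − 2γκ + γ²/β²). If the sequence (x_k) satisfies x_{k+1} = J(x_k − γ B x_k) for all k ∈ ℕ and x̄ ∈ H satisfies x̄ = J(x̄ − γ B x̄), then ‖x_k − x̄‖ ≤ ρ^k ‖x_0 − x̄‖ for every k ∈ ℕ. -/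
/-! The forward step `z ↦ z - γ • B z` of a `κ`-strongly monotone, `L`-Lipschitz operator is
`√(1 - 2γκ + γ²L²)`-Lipschitz: expanding the square, strong monotonicity controls the cross term
and the Lipschitz bound the quadratic one. Composing with the nonexpansive `J` keeps the constant,
so the Forward–Backward iterates approach the fixed point `x̄` geometrically. -/

section ForwardStep

variable {H : Type*} [NormedAddCommGroup H] [InnerProductSpace ℝ H]

theorem norm_sub_smul_sub_sq_le {B : H → H} {κ L γ : ℝ} (hγ : 0 ≤ γ)
    (hmono : ∀ x y : H, κ * ‖x - y‖ ^ 2 ≤ inner ℝ (B x - B y) (x - y))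
    (hlip : ∀ x y : H, ‖B x - B y‖ ≤ L * ‖x - y‖) (a b : H) :
    ‖(a - γ • B a) - (b - γ • B b)‖ ^ 2 ≤ (1 - 2 * γ * κ + γ ^ 2 * L ^ 2) * ‖a - b‖ ^ 2 := by
  have hsplit : (a - γ • B a) - (b - γ • B b) = (a - b) - γ • (B a - B b) := by
    rw [smul_sub]; abel
  have hcross : 2 * γ * (κ * ‖a - b‖ ^ 2) ≤ 2 * γ * inner ℝ (B a - B b) (a - b) :=
    mul_le_mul_of_nonneg_left (hmono a b) (by positivity)
  have hquad : ‖B a - B b‖ ^ 2 ≤ (L * ‖a - b‖) ^ 2 :=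
    pow_le_pow_left₀ (norm_nonneg _) (hlip a b) 2
  rw [hsplit, norm_sub_sq_real, real_inner_smul_right, real_inner_comm, norm_smul,
    Real.norm_eq_abs, mul_pow, sq_abs]
  nlinarith [mul_le_mul_of_nonneg_left hquad (sq_nonneg γ)]

theorem norm_sub_smul_sub_le {B : H → H} {κ L γ : ℝ} (hγ : 0 ≤ γ)
    (hmono : ∀ x y : H, κ * ‖x - y‖ ^ 2 ≤ inner ℝ (B x - B y) (x - y))
    (hlip : ∀ x y : H, ‖B x - B y‖ ≤ L * ‖x - y‖) (a b : H) :
    ‖(a - γ • B a) - (b - γ • B b)‖ ≤ √(1 - 2 * γ * κ + γ ^ 2 * L ^ 2) * ‖a - b‖ := by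
  calc ‖(a - γ • B a) - (b - γ • B b)‖
      ≤ √((1 - 2 * γ * κ + γ ^ 2 * L ^ 2) * ‖a - b‖ ^ 2) :=
        Real.le_sqrt_of_sq_le (norm_sub_smul_sub_sq_le hγ hmono hlip a b)
    _ = √(1 - 2 * γ * κ + γ ^ 2 * L ^ 2) * ‖a - b‖ := by
        rw [Real.sqrt_mul' _ (sq_nonneg _), Real.sqrt_sq (norm_nonneg _)]

end ForwardStep

theorem dist_le_pow_mul_of_dist_map_le {X : Type*} [PseudoMetricSpace X] {T : X → X} {ρ : ℝ}
    (hρ : 0 ≤ ρ) (hT : ∀ a b, dist (T a) (T b) ≤ ρ * dist a b) {x : ℕ → X}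
    (hx : ∀ k, x (k + 1) = T (x k)) {p : X} (hp : T p = p) (k : ℕ) :
    dist (x k) p ≤ ρ ^ k * dist (x 0) p := by
  induction k with
  | zero => simp
  | succ k ih =>
    calc dist (x (k + 1)) p = dist (T (x k)) (T p) := by rw [hx, hp]
      _ ≤ ρ * dist (x k) p := hT _ _
      _ ≤ ρ * (ρ ^ k * dist (x 0) p) := mul_le_mul_of_nonneg_left ih hρ
      _ = ρ ^ (k + 1) * dist (x 0) p := by ring

theorem forward_backward_linear_convergence_general {H : Type*} [NormedAddCommGroup H]
    [InnerProductSpace ℝ H] (κ β : ℝ)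
    (B : H → H)
    (hmono : ∀ x y : H, (inner ℝ (B x - B y) (x - y) : ℝ) ≥ κ * ‖x - y‖ ^ 2)
    (hlip : ∀ x y : H, ‖B x - B y‖ ≤ (1 / β) * ‖x - y‖)
    (J : H → H) (hJ : ∀ x y : H, ‖J x - J y‖ ≤ ‖x - y‖)
    (γ : ℝ) (hγ : 0 < γ)
    (x : ℕ → H) (hiter : ∀ k : ℕ, x (k + 1) = J (x k - γ • B (x k)))
    (xbar : H) (hfix : xbar = J (xbar - γ • B xbar)) :
    ∀ k : ℕ, ‖x k - xbar‖
      ≤ Real.sqrt (1 - 2 * γ * κ + γ ^ 2 / β ^ 2) ^ k * ‖x 0 - xbar‖ := by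
  have hconst : γ ^ 2 / β ^ 2 = γ ^ 2 * (1 / β) ^ 2 := by ring
  have hstep : ∀ a b : H, dist (J (a - γ • B a)) (J (b - γ • B b))
      ≤ √(1 - 2 * γ * κ + γ ^ 2 / β ^ 2) * dist a b := fun a b => by
    rw [dist_eq_norm, dist_eq_norm, hconst]
    exact (hJ _ _).trans (norm_sub_smul_sub_le hγ.le hmono hlip a b)
  intro k
  simpa only [dist_eq_norm] using
    dist_le_pow_mul_of_dist_map_le (Real.sqrt_nonneg _) hstep hiter hfix.symm k

/-- linear convergence of Forward–Backward splitting. -/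
theorem forward_backward_linear_convergence {H : Type*} [NormedAddCommGroup H]
    [InnerProductSpace ℝ H] (κ β : ℝ) (hκ : 0 < κ) (hβ : 0 < β)
    (B : H → H)
    (hmono : ∀ x y : H, (inner ℝ (B x - B y) (x - y) : ℝ) ≥ κ * ‖x - y‖ ^ 2)
    (hlip : ∀ x y : H, ‖B x - B y‖ ≤ (1 / β) * ‖x - y‖)
    (J : H → H) (hJ : ∀ x y : H, ‖J x - J y‖ ≤ ‖x - y‖)
    (γ : ℝ) (hγ : 0 < γ)
    (hcontr₀ : 0 ≤ 1 - 2 * γ * κ + γ ^ 2 / β ^ 2)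
    (hcontr₁ : 1 - 2 * γ * κ + γ ^ 2 / β ^ 2 < 1)
    (x : ℕ → H) (hiter : ∀ k : ℕ, x (k + 1) = J (x k - γ • B (x k)))
    (xbar : H) (hfix : xbar = J (xbar - γ • B xbar)) :
    ∀ k : ℕ, ‖x k - xbar‖
      ≤ Real.sqrt (1 - 2 * γ * κ + γ ^ 2 / β ^ 2) ^ k * ‖x 0 - xbar‖ :=
  forward_backward_linear_convergence_general κ β B hmono hlip J hJ γ hγ x hiter xbar hfix
end

section
/- Let f : ℝⁿ → ℝ be the ℓ₀ function f(x) = #{i : x_i ≠ 0}, counting the nonzero coordinates of x in EuclideanSpace ℝ (Fin n). For x̄ ∈ ℝⁿ with support S = {i : x̄_i ≠ 0}, the limiting subdifferential of f at x̄ equals the coordinate subspace {v ∈ ℝⁿ : v_i = 0 for all i ∈ S}; equivalently, ∂f(x̄) = span{e_i : i ∉ S}, where e_i are the standard basis vectors. -/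
/-!
Near `x̄` no coordinate of the support can vanish, so `ℓ₀` can only jump up, by at least `1`,
while a linear term `⟨v, z - x̄⟩` stays below `1`; when no jump happens and `v` vanishes on the
support, that linear term is `0`. Hence every such `v` is a Fréchet subgradient. Conversely,
moving along `e_i` for `i` in the support keeps `ℓ₀` constant, which forces `v_i = 0`. So
`∂^F ℓ₀(y) = {v | v_S = 0}` with `S` the support of `y`; this closed set only shrinks as `S`
grows, so limits along `y → x̄` stay in `∂^F ℓ₀(x̄)`.
-/

open Filter Topology Set

noncomputable section

/-- The Fréchet (regular) subdifferential of `f` at `x`. -/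
def frechetSubdiff {E : Type*} [NormedAddCommGroup E] [InnerProductSpace ℝ E]
    (f : E → ℝ) (x : E) : Set E :=
  {v | ∀ ε > 0, ∃ δ > 0, ∀ z, z ≠ x → ‖z - x‖ < δ →
        f z - f x - (inner ℝ v (z - x) : ℝ) ≥ -ε * ‖z - x‖}

/-- The limiting subdifferential of `f` at `x`. -/
def limitingSubdiff {E : Type*} [NormedAddCommGroup E] [InnerProductSpace ℝ E]
    (f : E → ℝ) (x : E) : Set E :=
  {v | ∃ xs vs : ℕ → E,
        Filter.Tendsto xs Filter.atTop (nhds x) ∧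
        Filter.Tendsto (fun k => f (xs k)) Filter.atTop (nhds (f x)) ∧
        (∀ k, vs k ∈ frechetSubdiff f (xs k)) ∧
        Filter.Tendsto vs Filter.atTop (nhds v)}

section Subdifferential

variable {E : Type*} [NormedAddCommGroup E] [InnerProductSpace ℝ E] {f : E → ℝ} {x v : E}

theorem frechetSubdiff_subset_limitingSubdiff : frechetSubdiff f x ⊆ limitingSubdiff f x :=
  fun v hv => ⟨fun _ => x, fun _ => v, tendsto_const_nhds, tendsto_const_nhds, fun _ => hv,
    tendsto_const_nhds⟩

theorem limitingSubdiff_subset_of_eventually_frechetSubdiff_subset {C : Set E}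
    (hC : IsClosed C) (h : ∀ᶠ y in 𝓝 x, frechetSubdiff f y ⊆ C) : limitingSubdiff f x ⊆ C := by
  rintro v ⟨xs, vs, hxs, -, hvs, hv⟩
  exact hC.mem_of_tendsto hv ((hxs.eventually h).mono fun k hk => hk (hvs k))

theorem mem_frechetSubdiff_of_eventually_le (h : ∀ᶠ z in 𝓝 x, f x + inner ℝ v (z - x) ≤ f z) :
    v ∈ frechetSubdiff f x := by
  intro ε hε
  obtain ⟨δ, hδ, hball⟩ := Metric.eventually_nhds_iff.mp h
  refine ⟨δ, hδ, fun z _ hz => ?_⟩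
  have hle := hball (by rwa [dist_eq_norm])
  nlinarith [norm_nonneg (z - x)]

theorem inner_nonpos_of_mem_frechetSubdiff {d : E} (hv : v ∈ frechetSubdiff f x)
    (hd : ∀ᶠ t in 𝓝[>] (0 : ℝ), f (x + t • d) ≤ f x) : inner ℝ v d ≤ 0 := by
  rcases eq_or_ne d 0 with rfl | hd0
  · simp
  by_contra! hpos
  have hnorm : 0 < ‖d‖ := norm_pos_iff.mpr hd0
  obtain ⟨δ, hδ, hslope⟩ := hv (inner ℝ v d / (2 * ‖d‖)) (by positivity)
  obtain ⟨t, hft, ht0, htδ⟩ :=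
    (hd.and (Ioo_mem_nhdsGT (show (0 : ℝ) < δ / ‖d‖ by positivity))).exists
  have hstep : ‖(x + t • d) - x‖ = t * ‖d‖ := by
    rw [add_sub_cancel_left, norm_smul, Real.norm_of_nonneg ht0.le]
  have hlt : t * ‖d‖ < δ := (lt_div_iff₀ hnorm).mp htδ
  have key := hslope (x + t • d) (by simpa using ⟨ht0.ne', hd0⟩) (hstep ▸ hlt)
  rw [hstep, add_sub_cancel_left, real_inner_smul_right] at key
  field_simp at key
  nlinarith

theorem inner_eq_zero_of_mem_frechetSubdiff {d : E} (hv : v ∈ frechetSubdiff f x)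
    (hd : ∀ᶠ t in 𝓝 (0 : ℝ), f (x + t • d) ≤ f x) : inner ℝ v d = 0 := by
  have hneg : ∀ᶠ t in 𝓝 (0 : ℝ), f (x + t • -d) ≤ f x := by
    have := (neg_zero (G := ℝ) ▸ tendsto_neg (0 : ℝ)).eventually hd
    simpa only [neg_smul, smul_neg] using this
  have h₁ := inner_nonpos_of_mem_frechetSubdiff hv (nhdsWithin_le_nhds hd)
  have h₂ := inner_nonpos_of_mem_frechetSubdiff hv (nhdsWithin_le_nhds hneg)
  rw [inner_neg_right] at h₂
  linarith

end Subdifferential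

namespace EuclideanSpace

variable {ι : Type*} {x z v : EuclideanSpace ℝ ι}

def vanishingOnSupport (x : EuclideanSpace ℝ ι) : Set (EuclideanSpace ℝ ι) :=
  {v | ∀ i, x i ≠ 0 → v i = 0}

theorem isClosed_vanishingOnSupport (x : EuclideanSpace ℝ ι) :
    IsClosed (vanishingOnSupport x) := by
  simp only [vanishingOnSupport, ofPred_forall]
  exact isClosed_iInter fun i => isClosed_iInter fun _ =>
    isClosed_eq (PiLp.continuous_apply 2 _ i) continuous_const

theorem vanishingOnSupport_anti (h : ∀ i, x i ≠ 0 → z i ≠ 0) :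
    vanishingOnSupport z ⊆ vanishingOnSupport x :=
  fun _ hv i hx => hv i (h i hx)

variable [Fintype ι]

def l0 (x : EuclideanSpace ℝ ι) : ℝ := ((Finset.univ.filter fun i => x i ≠ 0).card : ℝ)


theorem l0_le_l0 (h : ∀ i, x i ≠ 0 → z i ≠ 0) : l0 x ≤ l0 z := by
  unfold l0
  exact_mod_cast Finset.card_le_card fun i => by simpa using h i

theorem l0_add_one_le_l0 (h : ∀ i, x i ≠ 0 → z i ≠ 0) {i : ι} (hx : x i = 0) (hz : z i ≠ 0) :
    l0 x + 1 ≤ l0 z := by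
  unfold l0
  exact_mod_cast Finset.card_lt_card ⟨fun j => by simpa using h j,
    fun hsub => (by simpa using hsub (by simpa using hz) : x i ≠ 0) hx⟩

theorem eventually_support_subset (x : EuclideanSpace ℝ ι) :
    ∀ᶠ z in 𝓝 x, ∀ i, x i ≠ 0 → z i ≠ 0 := by
  refine eventually_all.2 fun i => ?_
  by_cases hx : x i = 0
  · exact .of_forall fun _ h => absurd hx h
  · exact (((PiLp.continuous_apply 2 _ i).tendsto x).eventually_ne hx).mono fun _ h _ => h

theorem inner_sub_eq_zero_of_mem_vanishingOnSupport (hv : v ∈ vanishingOnSupport x)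
    (h : ∀ i, x i = 0 → z i = 0) : inner ℝ v (z - x) = 0 := by
  simp only [PiLp.inner_apply, PiLp.sub_apply]
  refine Finset.sum_eq_zero fun i _ => ?_
  by_cases hx : x i = 0
  · simp [hx, h i hx]
  · simp [hv i hx]

theorem eventually_l0_add_inner_le (hv : v ∈ vanishingOnSupport x) :
    ∀ᶠ z in 𝓝 x, l0 x + inner ℝ v (z - x) ≤ l0 z := by
  have hsmall : ∀ᶠ z in 𝓝 x, inner ℝ v (z - x) < 1 :=
    (continuous_const.inner (continuous_id.sub continuous_const)).continuousAt.eventually_lt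
      continuousAt_const (by simp)
  filter_upwards [eventually_support_subset x, hsmall] with z hsupp hlt
  by_cases hnew : ∃ i, x i = 0 ∧ z i ≠ 0
  · obtain ⟨i, hx, hz⟩ := hnew
    linarith [l0_add_one_le_l0 hsupp hx hz]
  · push Not at hnew
    rw [inner_sub_eq_zero_of_mem_vanishingOnSupport hv hnew, add_zero]
    exact l0_le_l0 hsupp

variable [DecidableEq ι]

theorem l0_add_smul_single_le (x : EuclideanSpace ℝ ι) {i : ι} (hx : x i ≠ 0) (t : ℝ) :
    l0 (x + t • single i 1) ≤ l0 x := by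
  refine l0_le_l0 fun j hj => ?_
  rcases eq_or_ne j i with rfl | hji
  · exact hx
  · simpa [hji] using hj

theorem frechetSubdiff_l0_eq (x : EuclideanSpace ℝ ι) :
    frechetSubdiff l0 x = vanishingOnSupport x := by
  refine Set.Subset.antisymm (fun v hv i hx => ?_) fun v hv =>
    mem_frechetSubdiff_of_eventually_le (eventually_l0_add_inner_le hv)
  have := inner_eq_zero_of_mem_frechetSubdiff hv
    (.of_forall (l0_add_smul_single_le x hx) : ∀ᶠ t in 𝓝 (0 : ℝ), _)
  rwa [inner_single_right, one_mul, conj_trivial] at this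

theorem limitingSubdiff_l0_eq (x : EuclideanSpace ℝ ι) :
    limitingSubdiff l0 x = vanishingOnSupport x := by
  refine Set.Subset.antisymm ?_ ((frechetSubdiff_l0_eq x).symm.subset.trans
    frechetSubdiff_subset_limitingSubdiff)
  refine limitingSubdiff_subset_of_eventually_frechetSubdiff_subset
    (isClosed_vanishingOnSupport x) ?_
  filter_upwards [eventually_support_subset x] with y hy
  rw [frechetSubdiff_l0_eq]
  exact vanishingOnSupport_anti hy

theorem span_single_eq_vanishingOnSupport (x : EuclideanSpace ℝ ι) :
    (Submodule.span ℝ {w | ∃ i, x i = 0 ∧ w = single i (1 : ℝ)} : Set (EuclideanSpace ℝ ι)) =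
      vanishingOnSupport x := by
  have himage : {w | ∃ i, x i = 0 ∧ w = single i (1 : ℝ)} =
      (basisFun ι ℝ).toBasis '' {i | x i = 0} := by
    ext w
    simp [eq_comm]
  ext v
  rw [SetLike.mem_coe, himage, Module.Basis.mem_span_image]
  simp [vanishingOnSupport, Set.subset_def, not_imp_comm]

end EuclideanSpace

/-- the limiting subdifferential of the ℓ₀ function. -/
theorem limitingSubdiff_l0 {n : ℕ} (xbar : EuclideanSpace ℝ (Fin n)) :
    limitingSubdiff
        (fun x : EuclideanSpace ℝ (Fin n) =>
          ((Finset.univ.filter fun i => x i ≠ 0).card : ℝ)) xbar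
      = {v : EuclideanSpace ℝ (Fin n) | ∀ i, xbar i ≠ 0 → v i = 0} ∧
    limitingSubdiff
        (fun x : EuclideanSpace ℝ (Fin n) =>
          ((Finset.univ.filter fun i => x i ≠ 0).card : ℝ)) xbar
      = ↑(Submodule.span ℝ
          {w : EuclideanSpace ℝ (Fin n) |
            ∃ i, xbar i = 0 ∧ w = EuclideanSpace.single i (1 : ℝ)}) := by
  have h := EuclideanSpace.limitingSubdiff_l0_eq xbar
  exact ⟨h, h.trans (EuclideanSpace.span_single_eq_vanishingOnSupport xbar).symm⟩

end
end
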